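/- arXiv:1103.3623 — 3 statements merged into one kernel-verified Lean document; each statement's English description precedes it below -/
import Mathlib

section
/- Let G be a group of homeomorphisms of a Hausdorff topological space M such that G is factorizable (for every open cover 𝒰 of M and every g ∈ G, g is a finite product g₁⋯g_r where each g_i is supported in some member of 𝒰) and non-fixing (for every x ∈ M there is g ∈ G with g(x) ≠ x). Then for every x ∈ M and every open neighborhood U of x, there exists g ∈ G supported in U with g(x) ≠ x. -/
/-! Factor an element moving `x` along the open cover `{U, {x}ᶜ}`. Some factor must move `x`,
and a factor supported in the complement of `{x}` fixes `x`, so that factor is supported in `U`. -/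

open Set

/-- `g` is supported in `U`: the closure of its non-fixed-point set lies in `U`. -/
def SupportedIn {M : Type*} [TopologicalSpace M] (g : Equiv.Perm M) (U : Set M) : Prop :=
  closure {y | g y ≠ y} ⊆ U

/-- `G` is factorizable: every element factors as a finite product of elements of `G`
each supported in a member of any given open cover. -/
def IsFactorizable {M : Type*} [TopologicalSpace M] (G : Subgroup (Equiv.Perm M)) : Prop :=
  ∀ 𝒰 : Set (Set M), (∀ U ∈ 𝒰, IsOpen U) → ⋃₀ 𝒰 = univ → ∀ g ∈ G,
    ∃ l : List (Equiv.Perm M), (∀ f ∈ l, f ∈ G ∧ ∃ U ∈ 𝒰, SupportedIn f U) ∧ l.prod = g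

theorem Equiv.Perm.exists_mem_apply_ne_of_prod_apply_ne {α : Type*} {l : List (Equiv.Perm α)}
    {x : α} (h : l.prod x ≠ x) : ∃ f ∈ l, f x ≠ x := by
  by_contra! hfix
  exact h (list_prod_mem (S := MulAction.stabilizer (Equiv.Perm α) x) hfix)

theorem SupportedIn.apply_eq_of_notMem {M : Type*} [TopologicalSpace M] {g : Equiv.Perm M}
    {U : Set M} {x : M} (hg : SupportedIn g U) (hx : x ∉ U) : g x = x := by
  by_contra hgx
  exact hx (hg (subset_closure hgx))

theorem sUnion_pair_compl_singleton_eq_univ {α : Type*} {U : Set α} {x : α} (hx : x ∈ U) :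
    ⋃₀ {U, {x}ᶜ} = univ := by
  rw [sUnion_pair, ← univ_subset_iff, ← union_compl_self {x}]
  exact union_subset_union_left _ (singleton_subset_iff.2 hx)

theorem exists_supported_moving_general {M : Type*} [TopologicalSpace M] [T2Space M]
    (G : Subgroup (Equiv.Perm M))
    (hfact : IsFactorizable G) (hnonfix : ∀ x : M, ∃ g ∈ G, g x ≠ x)
    (x : M) (U : Set M) (hU : IsOpen U) (hxU : x ∈ U) :
    ∃ g ∈ G, SupportedIn g U ∧ g x ≠ x := by
  obtain ⟨g₀, hg₀G, hg₀x⟩ := hnonfix x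
  have hopen : ∀ V ∈ ({U, {x}ᶜ} : Set (Set M)), IsOpen V := by
    rintro V (rfl | rfl)
    exacts [hU, isOpen_compl_singleton]
  obtain ⟨l, hl, rfl⟩ := hfact _ hopen (sUnion_pair_compl_singleton_eq_univ hxU) g₀ hg₀G
  obtain ⟨f, hfl, hfx⟩ := Equiv.Perm.exists_mem_apply_ne_of_prod_apply_ne hg₀x
  obtain ⟨hfG, V, rfl | rfl, hfV⟩ := hl f hfl
  · exact ⟨f, hfG, hfV, hfx⟩
  · exact absurd (hfV.apply_eq_of_notMem (notMem_compl_iff.2 rfl)) hfx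

/-- For a factorizable non-fixing group of homeomorphisms of a Hausdorff space in which
every point has a neighborhood basis of open sets with proper closure, every point can be
moved by an element supported in any prescribed open neighborhood of that point. -/
theorem exists_supported_moving {M : Type*} [TopologicalSpace M] [T2Space M]
    (hbasis : ∀ x : M, ∀ W ∈ nhds x, ∃ V : Set M, IsOpen V ∧ x ∈ V ∧ V ⊆ W ∧
      closure V ≠ univ)
    (G : Subgroup (Equiv.Perm M)) (hcont : ∀ g ∈ G, Continuous ⇑g)
    (hfact : IsFactorizable G) (hnonfix : ∀ x : M, ∃ g ∈ G, g x ≠ x)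
    (x : M) (U : Set M) (hU : IsOpen U) (hxU : x ∈ U) :
    ∃ g ∈ G, SupportedIn g U ∧ g x ≠ x :=
  exists_supported_moving_general G hfact hnonfix x U hU hxU
end

section
/- Let G be a factorizable, non-fixing group of homeomorphisms of a topological manifold M of positive dimension. Then for every x ∈ M and every open neighborhood U of x there exist f, h ∈ G, both supported in U, such that the commutator [f,h] = f h f⁻¹ h⁻¹ moves x, i.e. [f,h](x) ≠ x. -/
/-!
Factorizing an element that moves `x` over the cover `{W, M \ {x}}` yields an element of `G`
supported in `W` that still moves `x`. Take such an `f` supported in `U`; by continuity and the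
Hausdorff property there is a neighbourhood `V ⊆ U` of `x` with `f V ∩ V = ∅`. Take `h` supported
in `V` moving `x`. Then `h⁻¹ x ∈ V`, so `f⁻¹ (h⁻¹ x) ∉ V` is fixed by `h`, whence
`⁅f, h⁆ x = h⁻¹ x ≠ x`.
-/

open Set
open scoped commutatorElement

section SupportedIn

variable {M : Type*} [TopologicalSpace M] {g : Equiv.Perm M} {U V : Set M}

theorem SupportedIn.mono (hg : SupportedIn g U) (hUV : U ⊆ V) : SupportedIn g V :=
  hg.trans hUV

theorem SupportedIn.mem_of_apply_ne (hg : SupportedIn g U) {y : M} (hy : g y ≠ y) : y ∈ U :=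
  hg (subset_closure hy)

theorem SupportedIn.apply_eq_of_notMem_s5 (hg : SupportedIn g U) {y : M} (hy : y ∉ U) :
    g y = y :=
  not_not.1 fun hne => hy (hg.mem_of_apply_ne hne)

end SupportedIn

theorem Equiv.Perm.list_prod_apply_eq_of_forall {M : Type*} {l : List (Equiv.Perm M)} {x : M}
    (h : ∀ f ∈ l, f x = x) : l.prod x = x := by
  have : l.prod ∈ MulAction.stabilizer (Equiv.Perm M) x :=
    Subgroup.list_prod_mem _ fun f hf => MulAction.mem_stabilizer_iff.2 (h f hf)
  exact MulAction.mem_stabilizer_iff.1 this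

theorem IsFactorizable.exists_supportedIn_apply_ne {M : Type*} [TopologicalSpace M] [T1Space M]
    {G : Subgroup (Equiv.Perm M)} (hG : IsFactorizable G) {g : Equiv.Perm M} (hgG : g ∈ G)
    {x : M} (hgx : g x ≠ x) {W : Set M} (hW : IsOpen W) (hxW : x ∈ W) :
    ∃ f ∈ G, SupportedIn f W ∧ f x ≠ x := by
  have hcover : ⋃₀ {W, {x}ᶜ} = univ := by
    refine eq_univ_of_forall fun y => ?_
    by_cases hy : y = x
    · exact ⟨W, .inl rfl, hy ▸ hxW⟩
    · exact ⟨{x}ᶜ, .inr rfl, hy⟩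
  obtain ⟨l, hl, rfl⟩ := hG {W, {x}ᶜ} (by rintro V (rfl | rfl) <;> simp [hW]) hcover g hgG
  obtain ⟨f, hfl, hfx⟩ : ∃ f ∈ l, f x ≠ x := by
    by_contra! hfix
    exact hgx (Equiv.Perm.list_prod_apply_eq_of_forall hfix)
  obtain ⟨hfG, V, hV | hV, hfV⟩ := hl f hfl
  · exact ⟨f, hfG, hV ▸ hfV, hfx⟩
  · exact absurd (hV ▸ hfV.mem_of_apply_ne hfx) (by simp)

theorem exists_open_subset_apply_notMem {M : Type*} [TopologicalSpace M] [T2Space M]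
    {f : M → M} (hf : Continuous f) {x : M} (hfx : f x ≠ x) {U : Set M} (hU : IsOpen U)
    (hxU : x ∈ U) : ∃ V ⊆ U, IsOpen V ∧ x ∈ V ∧ ∀ y ∈ V, f y ∉ V := by
  obtain ⟨u, v, hu, hv, hfxu, hxv, huv⟩ := t2_separation hfx
  refine ⟨f ⁻¹' u ∩ v ∩ U, inter_subset_right, ((hf.isOpen_preimage u hu).inter hv).inter hU,
    ⟨⟨hfxu, hxv⟩, hxU⟩, ?_⟩
  rintro y ⟨⟨hyu, -⟩, -⟩ ⟨⟨-, hyv⟩, -⟩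
  exact huv.ne_of_mem hyu hyv rfl

theorem commutatorElement_apply_eq_inv_apply {M : Type*} {f h : Equiv.Perm M} {V : Set M}
    (hf : ∀ y ∈ V, f y ∉ V) (hh : ∀ z ∉ V, h z = z) {x : M} (hx : x ∈ V) :
    ⁅f, h⁆ x = h⁻¹ x := by
  have hyV : h⁻¹ x ∈ V := by
    by_contra hy
    have hxy : x = h⁻¹ x := by simpa using hh _ hy
    exact hy (hxy ▸ hx)
  have hfy : f⁻¹ (h⁻¹ x) ∉ V := fun hc => hf _ hc (by simpa using hyV)
  rw [commutatorElement_def, Equiv.Perm.mul_apply, Equiv.Perm.mul_apply, Equiv.Perm.mul_apply,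
    hh _ hfy]
  exact f.apply_symm_apply _

theorem exists_commutator_moving_general {M : Type*} [TopologicalSpace M]
    [T2Space M]
    (G : Subgroup (Equiv.Perm M)) (hcont : ∀ g ∈ G, Continuous ⇑g)
    (hfact : IsFactorizable G) (hnonfix : ∀ x : M, ∃ g ∈ G, g x ≠ x)
    (x : M) (U : Set M) (hU : IsOpen U) (hxU : x ∈ U) :
    ∃ f ∈ G, ∃ h ∈ G, SupportedIn f U ∧ SupportedIn h U ∧ ⁅f, h⁆ x ≠ x := by
  obtain ⟨g, hgG, hgx⟩ := hnonfix x
  obtain ⟨f, hfG, hfU, hfx⟩ := hfact.exists_supportedIn_apply_ne hgG hgx hU hxU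
  obtain ⟨V, hVU, hV, hxV, hfV⟩ := exists_open_subset_apply_notMem (hcont f hfG) hfx hU hxU
  obtain ⟨h, hhG, hhV, hhx⟩ := hfact.exists_supportedIn_apply_ne hgG hgx hV hxV
  refine ⟨f, hfG, h, hhG, hfU, hhV.mono hVU, ?_⟩
  rw [commutatorElement_apply_eq_inv_apply hfV (fun _ => hhV.apply_eq_of_notMem_s5) hxV]
  exact fun hinv => hhx (by simpa using (congrArg h hinv).symm)

/-- For a factorizable, non-fixing group of homeomorphisms of a topological manifold of
positive dimension, near every point and inside every open neighborhood of it there are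
two elements of `G` supported in that neighborhood whose commutator moves the point. -/
theorem exists_commutator_moving (n : ℕ) (hn : 0 < n) {M : Type*} [TopologicalSpace M]
    [T2Space M] [ChartedSpace (EuclideanSpace ℝ (Fin n)) M]
    (G : Subgroup (Equiv.Perm M)) (hcont : ∀ g ∈ G, Continuous ⇑g)
    (hfact : IsFactorizable G) (hnonfix : ∀ x : M, ∃ g ∈ G, g x ≠ x)
    (x : M) (U : Set M) (hU : IsOpen U) (hxU : x ∈ U) :
    ∃ f ∈ G, ∃ h ∈ G, SupportedIn f U ∧ SupportedIn h U ∧ ⁅f, h⁆ x ≠ x :=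
  exists_commutator_moving_general G hcont hfact hnonfix x U hU hxU
end

section
/- Let G be a group acting faithfully by bijections on a set M, H a normal subgroup of G, h ∈ H, and U ⊆ M with h(U) ∩ U = ∅. Then for all f, g ∈ G supported in U, the commutator [f, g] belongs to H. -/
open scoped commutatorElement

/-!
Conjugating `f` by `h` moves its support into `h '' U`, which is disjoint from `U`, so
`h * f * h⁻¹` commutes with `g`. Since `h ∈ H`, the element `h * f * h⁻¹` agrees with `f`
modulo `H`, hence `f` and `g` commute in `G ⧸ H`, i.e. `⁅f, g⁆ ∈ H`.
-/

theorem commutatorElement_mem_of_commute_conj {G : Type*} [Group G] {H : Subgroup G}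
    [H.Normal] {h f g : G} (hh : h ∈ H) (hcomm : Commute (h * f * h⁻¹) g) :
    ⁅f, g⁆ ∈ H := by
  have hh' : QuotientGroup.mk' H h = 1 := (QuotientGroup.eq_one_iff h).mpr hh
  have hcomm' := hcomm.map (QuotientGroup.mk' H)
  rw [map_mul, map_mul, map_inv, hh', one_mul, inv_one, mul_one] at hcomm'
  rw [← QuotientGroup.eq_one_iff, ← QuotientGroup.mk'_apply, map_commutatorElement,
    commutatorElement_eq_one_iff_commute]
  exact hcomm'

namespace Equiv.Perm

variable {M : Type*}

theorem disjoint_of_fixes_compl {a b : Perm M} {A B : Set M} (hAB : A ∩ B = ∅)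
    (ha : ∀ y ∉ A, a y = y) (hb : ∀ y ∉ B, b y = y) : a.Disjoint b := by
  intro x
  by_cases hxA : x ∈ A
  · exact Or.inr (hb x fun hxB => (Set.eq_empty_iff_forall_notMem.mp hAB) x ⟨hxA, hxB⟩)
  · exact Or.inl (ha x hxA)

theorem conj_fixes_compl_image {f : Perm M} {U : Set M} (hf : ∀ y ∉ U, f y = y)
    (h : Perm M) : ∀ y ∉ h '' U, (h * f * h⁻¹) y = y := by
  intro y hy
  have hy' : h⁻¹ y ∉ U := fun hU => hy ⟨h⁻¹ y, hU, h.apply_symm_apply y⟩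
  rw [mul_apply, mul_apply, hf _ hy']
  exact h.apply_symm_apply y

end Equiv.Perm

/-- Ping-pong step: if `G` acts faithfully by bijections on `M` (realized as a subgroup
of the permutation group), `H` is a normal subgroup of `G`, `h ∈ H` satisfies
`h(U) ∩ U = ∅`, and `f, g ∈ G` are supported in `U`, then `[f, g] ∈ H`. -/
theorem commutator_mem_normal {M : Type*} (G : Subgroup (Equiv.Perm M))
    (H : Subgroup G) (hHnormal : H.Normal)
    (h : G) (hh : h ∈ H) (U : Set M) (hdisj : (⇑(h : Equiv.Perm M) '' U) ∩ U = ∅)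
    (f g : G)
    (hf : ∀ y ∉ U, (f : Equiv.Perm M) y = y) (hg : ∀ y ∉ U, (g : Equiv.Perm M) y = y) :
    ⁅f, g⁆ ∈ H := by
  refine commutatorElement_mem_of_commute_conj hh ?_
  have hdisjoint : ((h * f * h⁻¹ : G) : Equiv.Perm M).Disjoint g := by
    push_cast
    exact Equiv.Perm.disjoint_of_fixes_compl hdisj (Equiv.Perm.conj_fixes_compl_image hf _) hg
  exact hdisjoint.commute.of_map (f := G.subtype) Subtype.val_injective
end
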